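/- Let n ≥ 1, let f : ℝ → ℂ be any function, and let x₀,…,x_n ∈ ℝ be pairwise distinct. Then f^{[n]}(x₀,…,x_n) = Σ_{p=0}^n (−1)^{n−p} Σ_{0 < j₁ < ⋯ < j_p ≤ n} (f·u^p)^{[p]}(x₀, x_{j₁},…,x_{j_p}) · ∏_{k=1}^n (x_k − i)⁻¹, where the inner sum runs over all strictly increasing p-tuples of indices from {1,…,n}, and the p = 0 term is (−1)^n f(x₀)·∏_{k=1}^n (x_k − i)⁻¹. -/

import Mathlib

/-!
Both sides are linear in the values `f (x j)`, so it suffices to compare coefficients. Writing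
`u = x - i`, the coefficient of `f (x j)` on the right is, up to the common factor
`∏ (x_k - i)⁻¹`, an alternating sum over subsets `t` of the other nodes of `∏_{k ∈ t} w_k` with
`w_k = u(x_j) / (x_j - x_k)`. That sum is `∏_k (w_k - 1)`, and `w_k - 1 = u(x_k) / (x_j - x_k)`,
so the `u`-factors cancel and leave the coefficient `1 / ∏_k (x_j - x_k)` of the left side.
-/

/-- The `m`-th order divided difference of `f : ℝ → ℂ` at the `m+1` points `x 0, …, x m`,
given by the explicit symmetric formula (valid for pairwise distinct points). -/
noncomputable def divDiff {m : ℕ} (f : ℝ → ℂ) (x : Fin (m + 1) → ℝ) : ℂ :=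
  ∑ j, f (x j) / ∏ k ∈ Finset.univ.erase j, ((x j : ℂ) - (x k : ℂ))

open Finset

theorem Finset.sum_powerset_neg_one_pow_mul_prod {ι R : Type*} [DecidableEq ι] [CommRing R]
    (s : Finset ι) (w : ι → R) :
    ∑ t ∈ s.powerset, (-1) ^ (#s - #t) * ∏ k ∈ t, w k = ∏ k ∈ s, (w k - 1) := by
  simp only [sub_eq_add_neg, prod_add, prod_const]
  refine sum_congr rfl fun t ht => ?_
  rw [card_sdiff_of_subset (mem_powerset.1 ht), mul_comm]

theorem Finset.sum_powerset_map {α β M : Type*} [DecidableEq β] [AddCommMonoid M]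
    (s : Finset α) (e : α ↪ β) (F : Finset β → M) :
    ∑ t ∈ (s.map e).powerset, F t = ∑ t ∈ s.powerset, F (t.map e) := by
  simp_rw [map_eq_image]
  rw [powerset_image, sum_image]
  exact fun _ _ _ _ h => image_injective e.injective h

section DivDiffOn

variable {ι K : Type*} [DecidableEq ι] [Field K]

/-- `g j` plays the role of `f (x j)`; indexing the nodes by a finset makes sub-families of nodes
available without renumbering. -/
def divDiffOn (g x : ι → K) (A : Finset ι) : K :=
  ∑ j ∈ A, g j / ∏ k ∈ A.erase j, (x j - x k)

theorem divDiffOn_eq_sum_ite (g x : ι → K) {A B : Finset ι} (h : B ⊆ A) :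
    divDiffOn g x B = ∑ j ∈ A, if j ∈ B then g j / ∏ k ∈ B.erase j, (x j - x k) else 0 := by
  rw [sum_ite_mem, inter_eq_right.2 h]
  rfl

theorem sum_powerset_neg_one_pow_mul_pow_div_prod (x : ι → K) (c : K) {j : ι} {s : Finset ι}
    (hj : ∀ k ∈ s, x j ≠ x k) :
    ∑ t ∈ s.powerset, (-1) ^ (#s - #t) * ((x j - c) ^ #t / ∏ k ∈ t, (x j - x k)) =
      (∏ k ∈ s, (x k - c)) / ∏ k ∈ s, (x j - x k) := by
  have hfactor : ∀ k ∈ s, (x j - c) / (x j - x k) - 1 = (x k - c) / (x j - x k) := fun k hk => by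
    field_simp [sub_ne_zero.2 (hj k hk)]
    ring
  simp_rw [← prod_const, ← prod_div_distrib]
  rw [sum_powerset_neg_one_pow_mul_prod, prod_congr rfl hfactor]

/-- The coefficient of `g j` on the right-hand side of `divDiffOn_insert_eq_sum_powerset`,
before the factor `∏ k ∈ T, (x k - c)⁻¹`. -/
theorem sum_powerset_divDiffOn_coeff (x : ι → K) (c : K) {a j : ι} {T : Finset ι} (ha : a ∉ T)
    (hx : Set.InjOn x (insert a T : Finset ι)) (hj : j ∈ insert a T) :
    ∑ s ∈ T.powerset, (-1) ^ (#T - #s) *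
        (if j ∈ insert a s then (x j - c) ^ #s / ∏ k ∈ (insert a s).erase j, (x j - x k) else 0) =
      (∏ k ∈ T, (x k - c)) / ∏ k ∈ (insert a T).erase j, (x j - x k) := by
  have hne : ∀ k ∈ (insert a T).erase j, x j ≠ x k := fun k hk h =>
    (mem_erase.1 hk).1 (hx (mem_coe.2 (mem_erase.1 hk).2) (mem_coe.2 hj) h.symm)
  rcases mem_insert.1 hj with rfl | hjT
  · rw [erase_insert ha] at hne ⊢
    rw [← sum_powerset_neg_one_pow_mul_pow_div_prod x c hne]
    refine sum_congr rfl fun s hs => ?_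
    rw [if_pos (mem_insert_self j s), erase_insert (notMem_mono (mem_powerset.1 hs) ha)]
  · obtain ⟨T, hjT', rfl⟩ : ∃ T', j ∉ T' ∧ T = insert j T' :=
      ⟨T.erase j, notMem_erase j T, (insert_erase hjT).symm⟩
    have hja : j ≠ a := fun h => ha (h ▸ hjT)
    have haT : a ∉ T := fun h => ha (mem_insert_of_mem h)
    have hneT : ∀ k ∈ T, x j ≠ x k := fun k hk =>
      hne k (mem_erase.2 ⟨fun h => hjT' (h ▸ hk), mem_insert_of_mem (mem_insert_of_mem hk)⟩)
    have hvanish : ∀ s ∈ T.powerset, j ∉ insert a s := fun s hs h =>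
      (mem_insert.1 h).elim hja (notMem_mono (mem_powerset.1 hs) hjT')
    rw [sum_powerset_insert hjT', sum_eq_zero fun s hs => by rw [if_neg (hvanish s hs), mul_zero],
      zero_add, erase_insert_of_ne hja.symm, erase_insert hjT', prod_insert hjT', prod_insert haT,
      ← div_mul_div_comm, ← sum_powerset_neg_one_pow_mul_pow_div_prod x c hneT, mul_sum]
    refine sum_congr rfl fun t ht => ?_
    have hjt : j ∉ t := notMem_mono (mem_powerset.1 ht) hjT'
    rw [if_pos (mem_insert_of_mem (mem_insert_self j t)), erase_insert_of_ne hja.symm,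
      erase_insert hjt, prod_insert (notMem_mono (mem_powerset.1 ht) haT), card_insert_of_notMem hjt,
      card_insert_of_notMem hjT', Nat.add_sub_add_right, pow_succ', mul_div_mul_comm,
      mul_left_comm]

theorem divDiffOn_insert_eq_sum_powerset (g x : ι → K) (c : K) {a : ι} {T : Finset ι} (ha : a ∉ T)
    (hx : Set.InjOn x (insert a T : Finset ι)) (hc : ∀ k ∈ T, x k ≠ c) :
    divDiffOn g x (insert a T) = ∑ s ∈ T.powerset, (-1) ^ (#T - #s) *
      divDiffOn (fun j => g j * (x j - c) ^ #s) x (insert a s) * ∏ k ∈ T, (x k - c)⁻¹ := by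
  have hunit : (∏ k ∈ T, (x k - c)) * ∏ k ∈ T, (x k - c)⁻¹ = 1 := by
    rw [← prod_mul_distrib]
    exact prod_eq_one fun k hk => mul_inv_cancel₀ (sub_ne_zero.2 (hc k hk))
  symm
  calc ∑ s ∈ T.powerset, (-1) ^ (#T - #s) *
        divDiffOn (fun j => g j * (x j - c) ^ #s) x (insert a s) * ∏ k ∈ T, (x k - c)⁻¹
      = ∑ s ∈ T.powerset, ∑ j ∈ insert a T, (-1) ^ (#T - #s) *
          (if j ∈ insert a s then g j * (x j - c) ^ #s / ∏ k ∈ (insert a s).erase j, (x j - x k)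
            else 0) * ∏ k ∈ T, (x k - c)⁻¹ := by
        refine sum_congr rfl fun s hs => ?_
        rw [divDiffOn_eq_sum_ite _ _ (insert_subset_insert a (mem_powerset.1 hs)), mul_sum,
          sum_mul]
    _ = ∑ j ∈ insert a T, g j * (∑ s ∈ T.powerset, (-1) ^ (#T - #s) *
          (if j ∈ insert a s then (x j - c) ^ #s / ∏ k ∈ (insert a s).erase j, (x j - x k)
            else 0)) * ∏ k ∈ T, (x k - c)⁻¹ := by
        rw [sum_comm]
        refine sum_congr rfl fun j _ => ?_
        rw [mul_sum, sum_mul]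
        refine sum_congr rfl fun s _ => ?_
        split_ifs <;> ring
    _ = divDiffOn g x (insert a T) := by
        refine sum_congr rfl fun j hj => ?_
        rw [sum_powerset_divDiffOn_coeff x c ha hx hj, mul_assoc, div_mul_eq_mul_div, hunit,
          mul_one_div]

end DivDiffOn

theorem divDiff_comp_embedding {ι : Type*} [DecidableEq ι] {m : ℕ} (f : ℝ → ℂ) (y : ι → ℝ)
    (e : Fin (m + 1) ↪ ι) :
    divDiff f (y ∘ e) = divDiffOn (fun j => f (y j)) (fun j => (y j : ℂ)) (univ.map e) := by
  rw [divDiffOn, sum_map]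
  refine sum_congr rfl fun j _ => ?_
  rw [← map_erase, prod_map]
  rfl

theorem divDiff_cons_zero_succ_orderIsoOfFin {n : ℕ} (f : ℝ → ℂ) (x : Fin (n + 1) → ℝ)
    (s : Finset (Fin n)) :
    divDiff f (Fin.cons (x 0) fun i : Fin #s => x (Fin.succ (s.orderIsoOfFin rfl i : Fin n))) =
      divDiffOn (fun j => f (x j)) (fun j => (x j : ℂ)) (insert 0 (s.map (Fin.succEmb n))) := by
  let e : Fin (#s + 1) ↪ Fin (n + 1) :=
    ⟨Fin.cons 0 fun i => (s.orderEmbOfFin rfl i).succ,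
      Fin.cons_injective_of_injective (fun ⟨_, hi⟩ => Fin.succ_ne_zero _ hi)
        ((Fin.succ_injective n).comp (s.orderEmbOfFin rfl).injective)⟩
  have he : univ.map e = insert 0 (s.map (Fin.succEmb n)) := by
    rw [Fin.univ_succ, map_cons, cons_eq_insert, map_map]
    congr 1
    conv_rhs => rw [← map_orderEmbOfFin_univ s rfl, map_map]
    rfl
  rw [← he, ← divDiff_comp_embedding]
  exact congrArg _ (Fin.comp_cons x 0 _).symm

/-- The sum over `0 < j₁ < ⋯ < j_p ≤ n` is a sum over `s : Finset (Fin n)` (via `k ↦ k + 1`),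
with `p = #s` and `s` listed increasingly by `s.orderIsoOfFin`. -/
theorem stmt1 (n : ℕ) (f : ℝ → ℂ) (x : Fin (n + 1) → ℝ)
    (hx : Function.Injective x) :
    divDiff f x =
      ∑ s : Finset (Fin n),
        (-1 : ℂ) ^ (n - s.card) *
          divDiff (fun t : ℝ => f t * ((t : ℂ) - Complex.I) ^ s.card)
            (Fin.cons (x 0) fun i : Fin s.card => x (Fin.succ (s.orderIsoOfFin rfl i : Fin n))) *
          ∏ k : Fin n, ((x k.succ : ℂ) - Complex.I)⁻¹ := by
  have hI : ∀ k, (x k : ℂ) ≠ Complex.I := fun k h => by simpa using congrArg Complex.im h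
  have huniv : (univ : Finset (Fin (n + 1))) = insert 0 (univ.map (Fin.succEmb n)) := by
    rw [Fin.univ_succ, cons_eq_insert]
    rfl
  have key := divDiffOn_insert_eq_sum_powerset (fun j => f (x j)) (fun j => (x j : ℂ))
    Complex.I (a := 0) (T := univ.map (Fin.succEmb n)) (by simp)
    (Complex.ofReal_injective.comp hx).injOn (fun k _ => hI k)
  rw [← huniv, sum_powerset_map] at key
  simp only [card_map, card_univ, Fintype.card_fin, prod_map, Fin.coe_succEmb] at key
  simp only [divDiff_cons_zero_succ_orderIsoOfFin]
  exact key
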